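/- Let Ω and t be natural numbers with 1 ≤ t + 1 ≤ Ω, let g := gcd(Ω, t + 1), β̂ := (t + 1)/g, B̂ := Ω/g, and Ŝ := C(Ω, t + 1)/B̂. Let K be a finite set with Ω elements. Then the family of all (t+1)-element subsets of K can be partitioned into Ŝ pairwise disjoint subfamilies 𝔖̂(1), …, 𝔖̂(Ŝ) such that every k ∈ K belongs to exactly β̂ members of each subfamily 𝔖̂(î); consequently each subfamily has exactly B̂ members. -/

import Mathlib

/-!
Baranyai's argument, one point at a time. Fix `|ι| * B = C(n, k)` cells, `B` in each class, that
will eventually hold the `k`-sets, and after processing a set `s` of points keep in each cell only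
the trace on `s` of its future `k`-set. Every `A ⊆ s` must then occur as a trace exactly
`C(n - |s|, k - |A|)` times, as it does among all `k`-sets, and every processed point must lie in
`β` traces of each class. Adding a point `x` means choosing the cells that receive it: `β` per
class and `C(n - |s| - 1, k - |A| - 1)` among those with trace `A`. Weighting each cell by
`(k - |trace|) / (n - |s|)` meets these counts fractionally (this is where `β n = k B` enters),
and Hall's theorem, applied to a doubly stochastic token/cell matrix, rounds the fractional choice
to an integral one.
-/

open Finset

theorem card_filter_image_sigma {ι C : Type*} [Fintype ι] [DecidableEq ι] [DecidableEq C]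
    {a : ι → ℕ} (g : (Σ i, Fin (a i)) → C) (hg : Function.Injective g) (ρ : C → ι)
    (hρ : ∀ z, ρ (g z) = z.1) (i : ι) :
    #{c ∈ univ.image g | ρ c = i} = a i := by
  rw [filter_image, card_image_of_injective _ hg, card_filter, Fintype.sum_sigma]
  simp [hρ]

section Rounding

variable {R C I J : Type*} [Field R] [LinearOrder R] [IsStrictOrderedRing R] [Fintype C]
  [Fintype I] [Fintype J] [DecidableEq I] [DecidableEq J]

theorem exists_bijective_ne_zero_of_sum_eq_one {L M : Type*} [Fintype L] [Fintype M]
    [DecidableEq M] (w : L → M → R) (hw : ∀ l m, 0 ≤ w l m) (hrow : ∀ l, ∑ m, w l m = 1)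
    (hcol : ∀ m, ∑ l, w l m = 1) :
    ∃ f : L → M, Function.Bijective f ∧ ∀ l, w l (f l) ≠ 0 := by
  let t (l : L) : Finset M := {m | w l m ≠ 0}
  have hall (A : Finset L) : #A ≤ #(A.biUnion t) := by
    have hrowA (l) (hl : l ∈ A) : ∑ m ∈ A.biUnion t, w l m = 1 := by
      rw [← hrow l]
      refine sum_subset (subset_univ _) fun m _ hm => ?_
      by_contra h
      exact hm (mem_biUnion.2 ⟨l, hl, mem_filter.2 ⟨mem_univ m, h⟩⟩)
    have : (#A : R) ≤ #(A.biUnion t) :=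
      calc (#A : R) = ∑ l ∈ A, ∑ m ∈ A.biUnion t, w l m := by
            rw [sum_congr rfl hrowA, sum_const, nsmul_one]
        _ ≤ ∑ m ∈ A.biUnion t, ∑ l, w l m := by
            rw [sum_comm]
            exact sum_le_sum fun m _ =>
              sum_le_sum_of_subset_of_nonneg (subset_univ A) fun l _ _ => hw l m
        _ = #(A.biUnion t) := by rw [sum_congr rfl fun m _ => hcol m, sum_const, nsmul_one]
    exact_mod_cast this
  obtain ⟨f, hinj, hf⟩ := (all_card_le_biUnion_card_iff_exists_injective t).1 hall
  have hcard : Fintype.card L = Fintype.card M := by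
    have : (Fintype.card L : R) = Fintype.card M :=
      calc (Fintype.card L : R) = ∑ l, ∑ m, w l m := by simp [hrow]
        _ = ∑ m, ∑ l, w l m := sum_comm
        _ = Fintype.card M := by simp [hcol]
    exact_mod_cast this
  exact ⟨f, (Fintype.bijective_iff_injective_and_card f).2 ⟨hinj, hcard⟩,
    fun l => (mem_filter.1 (hf l)).2⟩

theorem exists_fiberwise_bijective_of_sum_eq [DecidableEq C] (ρ : C → I) (γ : C → J) (w : C → R)
    (hw0 : ∀ c, 0 ≤ w c) (hw1 : ∀ c, w c ≤ 1) (r : I → ℕ) (q : J → ℕ)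
    (hr : ∀ i, ∑ c with ρ c = i, w c = r i) (hq : ∀ j, ∑ c with γ c = j, (1 - w c) = q j) :
    ∃ f : (Σ i, Fin (r i)) ⊕ (Σ j, Fin (q j)) → C, Function.Bijective f ∧
      (∀ z, ρ (f (.inl z)) = z.1) ∧ ∀ z, γ (f (.inr z)) = z.1 := by
  have hr0 (c) (h : (r (ρ c) : R) = 0) : w c = 0 :=
    (sum_eq_zero_iff_of_nonneg fun c _ => hw0 c).1 (by rw [hr, h]) c (by simp)
  have hq0 (c) (h : (q (γ c) : R) = 0) : 1 - w c = 0 :=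
    (sum_eq_zero_iff_of_nonneg fun c _ => sub_nonneg.2 (hw1 c)).1 (by rw [hq, h]) c (by simp)
  let W : (Σ i, Fin (r i)) ⊕ (Σ j, Fin (q j)) → C → R
    | .inl z, c => if ρ c = z.1 then w c / r z.1 else 0
    | .inr z, c => if γ c = z.1 then (1 - w c) / q z.1 else 0
  obtain ⟨f, hf, hW⟩ := exists_bijective_ne_zero_of_sum_eq_one W
    (by
      rintro (z | z) c <;> simp only [W] <;> split_ifs
      · exact div_nonneg (hw0 c) (Nat.cast_nonneg _)
      · exact le_rfl
      · exact div_nonneg (sub_nonneg.2 (hw1 c)) (Nat.cast_nonneg _)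
      · exact le_rfl)
    (by
      rintro (⟨i, s⟩ | ⟨j, s⟩) <;> simp only [W] <;> rw [← sum_filter, ← sum_div]
      · rw [hr, div_self (by exact_mod_cast s.pos.ne')]
      · rw [hq, div_self (by exact_mod_cast s.pos.ne')])
    (by
      intro c
      simp only [W, Fintype.sum_sum_type, Fintype.sum_sigma, sum_const, card_univ,
        Fintype.card_fin, nsmul_eq_mul, mul_ite, mul_zero, sum_ite_eq, mem_univ, if_true]
      rw [mul_div_cancel_of_imp' (hr0 c), mul_div_cancel_of_imp' (hq0 c), add_sub_cancel])
  exact ⟨f, hf, fun z => of_not_not fun h => hW (.inl z) (if_neg h),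
    fun z => of_not_not fun h => hW (.inr z) (if_neg h)⟩

theorem exists_finset_card_filter_eq_of_sum_eq [DecidableEq C] (ρ : C → I) (γ : C → J)
    (w : C → R) (hw0 : ∀ c, 0 ≤ w c) (hw1 : ∀ c, w c ≤ 1) (r : I → ℕ) (q : J → ℕ)
    (hr : ∀ i, ∑ c with ρ c = i, w c = r i) (hq : ∀ j, ∑ c with γ c = j, w c = q j) :
    ∃ T : Finset C, (∀ i, #{c ∈ T | ρ c = i} = r i) ∧ ∀ j, #{c ∈ T | γ c = j} = q j := by
  have hle (j) : q j ≤ #{c | γ c = j} := by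
    have : (q j : R) ≤ #{c | γ c = j} := by
      rw [← hq, card_eq_sum_ones, Nat.cast_sum, Nat.cast_one]
      exact sum_le_sum fun c _ => hw1 c
    exact_mod_cast this
  -- `T` is the set of cells matched with tokens of `I`; the `#γ⁻¹ j - q j` tokens of `j` take up
  -- the cells of `γ⁻¹ j` left out of `T`.
  obtain ⟨f, hf, hρ, hγ⟩ := exists_fiberwise_bijective_of_sum_eq ρ γ w hw0 hw1 r
    (fun j => #{c | γ c = j} - q j) hr fun j => by
      rw [sum_sub_distrib, hq, Nat.cast_sub (hle j)]
      simp
  set T := univ.image (f ∘ .inl)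
  set T' := univ.image (f ∘ .inr)
  have hdisj : Disjoint T T' := by
    simp only [T, T', disjoint_left, mem_image, mem_univ, true_and, Function.comp_apply]
    rintro _ ⟨z, rfl⟩ ⟨z', h⟩
    exact Sum.inl_ne_inr (hf.1 h.symm)
  have hunion : T ∪ T' = univ := by
    refine eq_univ_of_forall fun c => ?_
    obtain ⟨z | z, rfl⟩ := hf.2 c <;> simp [T, T']
  refine ⟨T, card_filter_image_sigma _ (hf.1.comp Sum.inl_injective) ρ hρ, fun j => ?_⟩
  have hT' : #{c ∈ T' | γ c = j} = #{c | γ c = j} - q j :=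
    card_filter_image_sigma _ (hf.1.comp Sum.inr_injective) γ hγ j
  have hsplit : #{c ∈ T | γ c = j} + #{c ∈ T' | γ c = j} = #{c | γ c = j} := by
    rw [← card_union_of_disjoint (disjoint_filter_filter hdisj), ← filter_union, hunion]
  have := hle j
  omega

end Rounding

section Trace

variable {α : Type*} [Fintype α] [DecidableEq α]

def traceCount (k : ℕ) (s A : Finset α) : ℕ := #{T : Finset α | #T = k ∧ T ∩ s = A}

theorem traceCount_eq (k : ℕ) (s A : Finset α) :
    traceCount k s A =
      if A ⊆ s ∧ #A ≤ k then (Fintype.card α - #s).choose (k - #A) else 0 := by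
  split_ifs with h
  · rw [← card_compl, ← card_powersetCard]
    have hdisj {U : Finset α} (hU : U ⊆ sᶜ) : Disjoint U A :=
      disjoint_of_subset_right h.1 (subset_compl_iff_disjoint_right.1 hU)
    refine card_nbij' (· \ s) (· ∪ A) ?_ ?_ ?_ ?_ <;> intro T hT <;>
      simp only [coe_filter, mem_univ, true_and, Set.mem_ofPred_eq,
        mem_coe, mem_powersetCard] at hT ⊢
    · refine ⟨fun v hv => mem_compl.2 (mem_sdiff.1 hv).2, ?_⟩
      rw [card_sdiff, inter_comm, hT.2, hT.1]
    · refine ⟨?_, ?_⟩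
      · rw [card_union_of_disjoint (hdisj hT.1), hT.2]
        omega
      · rw [union_inter_distrib_right, inter_eq_left.2 h.1,
          disjoint_iff_inter_eq_empty.1 (subset_compl_iff_disjoint_right.1 hT.1), empty_union]
    · rw [← hT.2, sdiff_union_inter]
    · rw [union_sdiff_distrib, sdiff_eq_empty_iff_subset.2 h.1, union_empty,
        sdiff_eq_self_of_disjoint (subset_compl_iff_disjoint_right.1 hT.1)]
  · refine card_eq_zero.2 (filter_eq_empty_iff.2 fun T _ ⟨hT, hTA⟩ => h ?_)
    exact ⟨hTA ▸ inter_subset_right, hT ▸ hTA ▸ card_le_card inter_subset_left⟩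

theorem traceCount_insert_add_traceCount_insert {k : ℕ} {s A : Finset α} {x : α}
    (hxs : x ∉ s) (hxA : x ∉ A) :
    traceCount k (insert x s) A + traceCount k (insert x s) (insert x A) = traceCount k s A := by
  unfold traceCount
  rw [← card_filter_add_card_filter_not (s := {T : Finset α | #T = k ∧ T ∩ s = A}) (x ∉ ·),
    filter_filter, filter_filter]
  have hxsT (T : Finset α) : x ∉ T ∩ s := fun h => hxs (mem_inter.1 h).2
  have hinj (T : Finset α) : insert x (T ∩ s) = insert x A ↔ T ∩ s = A :=
    ⟨fun h => by rw [← erase_insert (hxsT T), h, erase_insert hxA], congrArg _⟩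
  have hne (T : Finset α) : insert x (T ∩ s) ≠ A := fun h => hxA (h ▸ mem_insert_self _ _)
  have hne' (T : Finset α) : T ∩ s ≠ insert x A := fun h => hxsT T (h ▸ mem_insert_self _ _)
  congr 2 <;> ext T <;> by_cases hxT : x ∈ T
  all_goals simp [hxT, inter_insert_of_mem, inter_insert_of_notMem, hinj, hne, hne']

theorem traceCount_mul_sub {k : ℕ} {s A : Finset α} {x : α} (hxs : x ∉ s) (hxA : x ∉ A) :
    traceCount k s A * (k - #A) =
      (Fintype.card α - #s) * traceCount k (insert x s) (insert x A) := by
  have hs := card_lt_univ_of_notMem hxs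
  simp only [traceCount_eq, card_insert_of_notMem hxs, card_insert_of_notMem hxA,
    insert_subset_insert_iff hxA]
  split_ifs with h h' h'
  · obtain ⟨N, hN⟩ := Nat.exists_eq_add_one.2 (Nat.sub_pos_of_lt hs)
    obtain ⟨j, hj⟩ := Nat.exists_eq_add_one.2 (Nat.sub_pos_of_lt h'.2)
    rw [hN, hj, (by omega : Fintype.card α - (#s + 1) = N), (by omega : k - (#A + 1) = j),
      Nat.add_one_mul_choose_eq]
  · rw [Nat.sub_eq_zero_of_le (not_lt.1 fun hk => h' ⟨h.1, hk⟩), mul_zero, mul_zero]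
  · exact absurd ⟨h'.1, by omega⟩ h
  · simp

theorem traceCount_univ (k : ℕ) (A : Finset α) :
    traceCount k univ A = if #A = k then 1 else 0 := by
  rw [traceCount_eq]
  split_ifs <;> simp_all [Nat.choose_eq_zero_iff]
  omega

theorem traceCount_empty (k : ℕ) (A : Finset α) :
    traceCount k ∅ A = if A = ∅ then (Fintype.card α).choose k else 0 := by
  by_cases h : A = ∅ <;> simp [traceCount_eq, h]

end Trace

section Baranyai

variable {α C ι : Type*} [Fintype α] [DecidableEq α] [Fintype C] [DecidableEq ι]

/-- `P c` is the trace on `s` of the `k`-set that cell `c` will eventually hold; the cells of each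
class `ρ⁻¹ i` are to form a `β`-regular family. -/
def IsPartialBaranyai (ρ : C → ι) (k β : ℕ) (s : Finset α) (P : C → Finset α) : Prop :=
  (∀ A, #{c | P c = A} = traceCount k s A) ∧ ∀ i, ∀ v ∈ s, #{c | ρ c = i ∧ v ∈ P c} = β

namespace IsPartialBaranyai

variable {ρ : C → ι} {k β : ℕ} {s : Finset α} {P : C → Finset α}

theorem subset_card_le (hP : IsPartialBaranyai ρ k β s P) (c : C) :
    P c ⊆ s ∧ #(P c) ≤ k ∧ k - #(P c) ≤ Fintype.card α - #s := by
  have h : traceCount k s (P c) ≠ 0 := by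
    rw [← hP.1]
    exact card_ne_zero_of_mem (mem_filter.2 ⟨mem_univ c, rfl⟩)
  rw [traceCount_eq] at h
  split_ifs at h with h'
  · exact ⟨h'.1, h'.2, not_lt.1 fun hlt => h (Nat.choose_eq_zero_of_lt hlt)⟩
  · exact absurd rfl h

theorem sum_card (hP : IsPartialBaranyai ρ k β s P) (i : ι) :
    ∑ c with ρ c = i, #(P c) = #s * β :=
  calc ∑ c with ρ c = i, #(P c) = ∑ c with ρ c = i, ∑ v ∈ s, if v ∈ P c then 1 else 0 := by
        refine sum_congr rfl fun c _ => ?_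
        rw [sum_boole, Nat.cast_id, filter_mem_eq_inter, inter_eq_right.2 (hP.subset_card_le c).1]
    _ = ∑ v ∈ s, #{c | ρ c = i ∧ v ∈ P c} := by
        rw [sum_comm]
        refine sum_congr rfl fun v _ => ?_
        rw [sum_boole, Nat.cast_id, filter_filter]
    _ = #s * β := by rw [sum_congr rfl (hP.2 i), sum_const, smul_eq_mul]

theorem sum_sub_card {B : ℕ} (hρ : ∀ i, #{c | ρ c = i} = B)
    (hβ : β * Fintype.card α = k * B) (hP : IsPartialBaranyai ρ k β s P) (i : ι) :
    ∑ c with ρ c = i, (k - #(P c)) = (Fintype.card α - #s) * β := by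
  have h : ∑ c with ρ c = i, (k - #(P c)) + #s * β = k * B := by
    rw [← hP.sum_card i, ← sum_add_distrib,
      sum_congr rfl fun c _ => Nat.sub_add_cancel (hP.subset_card_le c).2.1, sum_const,
      smul_eq_mul, hρ, mul_comm]
  rw [Nat.sub_mul, mul_comm _ β, hβ]
  omega

theorem exists_extension [DecidableEq C] [Fintype ι] {B : ℕ} (hρ : ∀ i, #{c | ρ c = i} = B)
    (hβ : β * Fintype.card α = k * B) (hP : IsPartialBaranyai ρ k β s P) {x : α} (hx : x ∉ s) :
    ∃ T : Finset C, (∀ i, #{c ∈ T | ρ c = i} = β) ∧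
      ∀ A, #{c ∈ T | P c = A} = if x ∈ A then 0 else traceCount k (insert x s) (insert x A) := by
  have hd : (0 : ℚ) < (Fintype.card α - #s : ℕ) := by
    exact_mod_cast Nat.sub_pos_of_lt (card_lt_univ_of_notMem hx)
  refine exists_finset_card_filter_eq_of_sum_eq ρ P
    (fun c => ((k - #(P c) : ℕ) : ℚ) / (Fintype.card α - #s : ℕ)) (fun c => by positivity)
    (fun c => div_le_one_of_le₀ (by exact_mod_cast (hP.subset_card_le c).2.2) hd.le) _ _
    (fun i => ?_) (fun A => ?_)
  · rw [← sum_div, ← Nat.cast_sum, hP.sum_sub_card hρ hβ i, Nat.cast_mul,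
      mul_div_cancel_left₀ _ hd.ne']
  · rw [sum_congr rfl fun c hc => by rw [(mem_filter.1 hc).2], sum_const, hP.1, nsmul_eq_mul]
    split_ifs with hxA
    · rw [traceCount_eq, if_neg fun h => hx (h.1 hxA)]
      simp
    · rw [mul_div_assoc', ← Nat.cast_mul, traceCount_mul_sub hx hxA, Nat.cast_mul,
        mul_div_cancel_left₀ _ hd.ne']

theorem extend [DecidableEq C] (hP : IsPartialBaranyai ρ k β s P) {x : α} (hx : x ∉ s)
    {T : Finset C} (hTρ : ∀ i, #{c ∈ T | ρ c = i} = β)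
    (hTP : ∀ A, #{c ∈ T | P c = A} =
      if x ∈ A then 0 else traceCount k (insert x s) (insert x A)) :
    IsPartialBaranyai ρ k β (insert x s) fun c => if c ∈ T then insert x (P c) else P c := by
  have hxP (c) : x ∉ P c := fun h => hx ((hP.subset_card_le c).1 h)
  refine ⟨fun A => ?_, fun i v hv => ?_⟩
  · by_cases hxA : x ∈ A
    · have hfib : ({c | (if c ∈ T then insert x (P c) else P c) = A} : Finset C) =
          {c ∈ T | P c = A.erase x} := by
        ext c
        by_cases hc : c ∈ T <;> simp only [hc, if_true, if_false, mem_filter, mem_univ, true_and,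
          false_and, iff_false]
        · exact ⟨fun h => h ▸ (erase_insert (hxP c)).symm, fun h => h ▸ insert_erase hxA⟩
        · exact fun h => hxP c (h ▸ hxA)
      rw [hfib, hTP, if_neg (notMem_erase x A), insert_erase hxA]
    · have hfib : ({c | (if c ∈ T then insert x (P c) else P c) = A} : Finset C) =
          {c ∈ Tᶜ | P c = A} := by
        ext c
        by_cases hc : c ∈ T <;> simp only [hc, if_true, if_false, mem_filter, mem_univ, true_and,
          mem_compl, not_true, not_false_eq_true, false_and, iff_false]
        exact fun h => hxA (h ▸ mem_insert_self x (P c))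
      have hsplit : #{c ∈ T | P c = A} + #{c ∈ Tᶜ | P c = A} = #{c | P c = A} := by
        rw [← card_union_of_disjoint (disjoint_filter_filter disjoint_compl_right),
          ← filter_union, union_compl]
      have := traceCount_insert_add_traceCount_insert (k := k) hx hxA
      rw [hTP, if_neg hxA, hP.1] at hsplit
      rw [hfib]
      omega
  · rcases mem_insert.1 hv with rfl | hv
    · rw [← hTρ i]
      congr 1
      ext c
      by_cases hc : c ∈ T <;> simp [hc, hxP]
    · have hvx : v ≠ x := fun h => hx (h ▸ hv)
      rw [← hP.2 i v hv]
      congr 1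
      ext c
      by_cases hc : c ∈ T <;> simp [hc, hvx]

end IsPartialBaranyai

theorem exists_regular_labelling [DecidableEq C] [Fintype ι] (ρ : C → ι) {k β B : ℕ}
    (hC : Fintype.card C = (Fintype.card α).choose k) (hρ : ∀ i, #{c | ρ c = i} = B)
    (hβ : β * Fintype.card α = k * B) :
    ∃ P : C → Finset α, Function.Injective P ∧ Set.range P = {A | #A = k} ∧
      ∀ i v, #{c | ρ c = i ∧ v ∈ P c} = β := by
  have hpartial (s : Finset α) : ∃ P : C → Finset α, IsPartialBaranyai ρ k β s P := by
    induction s using Finset.induction_on with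
    | empty =>
      refine ⟨fun _ => ∅, fun A => ?_, by simp⟩
      rw [traceCount_empty]
      split_ifs with h
      · simp [h, hC]
      · simp [Ne.symm h]
    | insert x s hx ih =>
      obtain ⟨P, hP⟩ := ih
      obtain ⟨T, hTρ, hTP⟩ := hP.exists_extension hρ hβ hx
      exact ⟨_, hP.extend hx hTρ hTP⟩
  obtain ⟨P, hcount, hreg⟩ := hpartial univ
  simp only [traceCount_univ] at hcount
  refine ⟨P, fun c c' h => ?_, ?_, fun i v => hreg i v (mem_univ v)⟩
  · have : #{c'' | P c'' = P c} ≤ 1 := by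
      rw [hcount]
      split_ifs <;> omega
    exact card_le_one.1 this c (by simp) c' (by simp [h])
  · ext A
    refine ⟨?_, fun hA => ?_⟩
    · rintro ⟨c, rfl⟩
      by_contra h
      have := hcount (P c)
      rw [if_neg (show #(P c) ≠ k from h)] at this
      exact card_ne_zero_of_mem (s := {c' | P c' = P c}) (mem_filter.2 ⟨mem_univ c, rfl⟩) this
    · obtain ⟨c, hc⟩ :=
        card_pos.1 (by rw [hcount A, if_pos (show #A = k from hA)]; exact one_pos)
      exact ⟨c, (mem_filter.1 hc).2⟩

end Baranyai

theorem exists_regular_partition_powersetCard {α ι : Type*} [Fintype α] [DecidableEq α]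
    [Fintype ι] [DecidableEq ι] {k β B : ℕ}
    (hcard : Fintype.card ι * B = (Fintype.card α).choose k)
    (hβ : β * Fintype.card α = k * B) :
    ∃ Q : ι → Finset (Finset α), (∀ i j, i ≠ j → Disjoint (Q i) (Q j)) ∧
      univ.biUnion Q = powersetCard k univ ∧ (∀ i v, #{A ∈ Q i | v ∈ A} = β) ∧
      ∀ i, #(Q i) = B := by
  obtain ⟨P, hinj, hrange, hreg⟩ := exists_regular_labelling (C := ι × Fin B) Prod.fst
    (by simp [hcard]) (fun i => by rw [card_filter, Fintype.sum_prod_type]; simp [apply_ite]) hβ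
  refine ⟨fun i => ({c | c.1 = i} : Finset (ι × Fin B)).image P, fun i j hij => ?_, ?_,
    fun i v => ?_, fun i => ?_⟩
  · rw [disjoint_left]
    intro A hAi hAj
    simp only [mem_image, mem_filter, mem_univ, true_and] at hAi hAj
    obtain ⟨c, rfl, rfl⟩ := hAi
    obtain ⟨c', rfl, h⟩ := hAj
    exact hij (congrArg Prod.fst (hinj h)).symm
  · ext A
    simp only [mem_biUnion, mem_image, mem_filter, mem_univ, true_and, mem_powersetCard,
      subset_univ]
    refine ⟨?_, fun hA => ?_⟩
    · rintro ⟨_, c, -, rfl⟩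
      exact hrange.subset ⟨c, rfl⟩
    · obtain ⟨c, rfl⟩ := hrange.symm.subset hA
      exact ⟨c.1, c, rfl, rfl⟩
  · rw [filter_image, card_image_of_injective _ hinj, filter_filter]
    exact hreg i v
  · rw [card_image_of_injective _ hinj, card_filter, Fintype.sum_prod_type]
    simp [apply_ite]

theorem Nat.div_gcd_dvd_choose {n k : ℕ} (hk : 0 < k) : n / n.gcd k ∣ n.choose k := by
  obtain ⟨k, rfl⟩ := Nat.exists_eq_add_one.2 hk
  rcases n with _ | n
  · simp
  set g := (n + 1).gcd (k + 1)
  refine (Nat.coprime_div_gcd_div_gcd (Nat.gcd_pos_of_pos_left _ n.succ_pos)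
    |>.dvd_of_dvd_mul_right ⟨n.choose k, ?_⟩)
  calc (n + 1).choose (k + 1) * ((k + 1) / g) = (n + 1).choose (k + 1) * (k + 1) / g :=
        (Nat.mul_div_assoc _ (Nat.gcd_dvd_right _ _)).symm
    _ = (n + 1) * n.choose k / g := by rw [Nat.add_one_mul_choose_eq]
    _ = (n + 1) / g * n.choose k := (Nat.div_mul_right_comm (Nat.gcd_dvd_left _ _) _).symm

theorem base_scheduling_partition_general
    {K : Type*} [Fintype K] [DecidableEq K]
    (Ω t : ℕ) (hK : Fintype.card K = Ω) :
    ∃ P : Fin (Nat.choose Ω (t + 1) / (Ω / Nat.gcd Ω (t + 1))) →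
          Finset (Finset K),
      (∀ i j, i ≠ j → Disjoint (P i) (P j)) ∧
      Finset.univ.biUnion P
        = Finset.powersetCard (t + 1) (Finset.univ : Finset K) ∧
      (∀ i, ∀ k : K,
        ((P i).filter (fun T => k ∈ T)).card
          = (t + 1) / Nat.gcd Ω (t + 1)) ∧
      (∀ i, (P i).card = Ω / Nat.gcd Ω (t + 1)) := by
  subst hK
  refine exists_regular_partition_powersetCard ?_ ?_
  · rw [Fintype.card_fin, Nat.div_mul_cancel (Nat.div_gcd_dvd_choose t.succ_pos)]
  · rw [Nat.div_mul_right_comm (Nat.gcd_dvd_right _ _),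
      Nat.mul_div_assoc _ (Nat.gcd_dvd_left _ _)]

/-- Baranyai-type base-scheduling partition: the family of all `(t+1)`-subsets
of an `Ω`-element set `K` can be partitioned into `Ŝ` pairwise disjoint
subfamilies, each `β̂`-regular over `K` (hence each of size `B̂`), where
`g = gcd(Ω, t+1)`, `β̂ = (t+1)/g`, `B̂ = Ω/g`, `Ŝ = C(Ω, t+1)/B̂`. -/
theorem base_scheduling_partition
    {K : Type*} [Fintype K] [DecidableEq K]
    (Ω t : ℕ) (hK : Fintype.card K = Ω) (h1 : 1 ≤ t + 1) (h2 : t + 1 ≤ Ω) :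
    ∃ P : Fin (Nat.choose Ω (t + 1) / (Ω / Nat.gcd Ω (t + 1))) →
          Finset (Finset K),
      (∀ i j, i ≠ j → Disjoint (P i) (P j)) ∧
      Finset.univ.biUnion P
        = Finset.powersetCard (t + 1) (Finset.univ : Finset K) ∧
      (∀ i, ∀ k : K,
        ((P i).filter (fun T => k ∈ T)).card
          = (t + 1) / Nat.gcd Ω (t + 1)) ∧
      (∀ i, (P i).card = Ω / Nat.gcd Ω (t + 1)) :=
  base_scheduling_partition_general Ω t hK
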